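/- Let ⟨H, I⟩ be an HT-interpretation, M an atom in I↓ ∖ H, and F a sentence such that: (i) for every edge (M, B) of the positive dependency graph G^sp_I(F), B ∈ H; (ii) M ∈ Pos_I(F); and (iii) ⟨H, I⟩ ⊨_ht F. Then ⟨I↓ ∖ {M}, I⟩ ⊨_ht F. -/
import Mathlib


/-! Framework: first-order formulas over a signature with predicate symbols `P`
(partitioned into intensional and extensional ones by `ints : P → Bool`) and a
fixed domain `D`.  Sentences over the extended signature σ^I are represented with
quantifiers as functions on the domain (names of domain elements are the elements
themselves), so ground atoms are pairs `(p, ds)`. -/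

inductive Fml (P D : Type) : Type where
  | atom : P → List D → Fml P D
  | eq : D → D → Fml P D
  | bot : Fml P D
  | and : Fml P D → Fml P D → Fml P D
  | or : Fml P D → Fml P D → Fml P D
  | imp : Fml P D → Fml P D → Fml P D
  | all : (D → Fml P D) → Fml P D
  | ex : (D → Fml P D) → Fml P D

abbrev GrAtom (P D : Type) := P × List D
abbrev Interp (P D : Type) := P → List D → Prop

namespace Fml
variable {P D : Type}

/-- Classical satisfaction. -/
def sat (I : Interp P D) : Fml P D → Prop
  | atom p ds => I p ds
  | eq a b => a = b
  | bot => False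
  | and F G => F.sat I ∧ G.sat I
  | or F G => F.sat I ∨ G.sat I
  | imp F G => F.sat I → G.sat I
  | all f => ∀ d, (f d).sat I
  | ex f => ∃ d, (f d).sat I

/-- `I↓`: the intensional ground atoms satisfied by `I`. -/
def idown (ints : P → Bool) (I : Interp P D) : Set (GrAtom P D) :=
  {a | ints a.1 = true ∧ I a.1 a.2}

/-- Here-and-there satisfaction for an HT-interpretation `⟨H, I⟩`. -/
def htSat (ints : P → Bool) (H : Set (GrAtom P D)) (I : Interp P D) : Fml P D → Prop
  | atom p ds => if ints p then (p, ds) ∈ H else I p ds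
  | eq a b => a = b
  | bot => False
  | and F G => F.htSat ints H I ∧ G.htSat ints H I
  | or F G => F.htSat ints H I ∨ G.htSat ints H I
  | imp F G => (F.htSat ints H I → G.htSat ints H I) ∧ (F.sat I → G.sat I)
  | all f => ∀ d, (f d).htSat ints H I
  | ex f => ∃ d, (f d).htSat ints H I

/-- `F` contains an intensional predicate symbol. -/
def hasIntens (ints : P → Bool) : Fml P D → Prop
  | atom p _ => ints p = true
  | eq _ _ => False
  | bot => False
  | and F G => F.hasIntens ints ∨ G.hasIntens ints
  | or F G => F.hasIntens ints ∨ G.hasIntens ints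
  | imp F G => F.hasIntens ints ∨ G.hasIntens ints
  | all f => ∃ d, (f d).hasIntens ints
  | ex f => ∃ d, (f d).hasIntens ints

/-- The predicate symbol `q` occurs in `F`. -/
def hasPred (q : P) : Fml P D → Prop
  | atom p _ => p = q
  | eq _ _ => False
  | bot => False
  | and F G => F.hasPred q ∨ G.hasPred q
  | or F G => F.hasPred q ∨ G.hasPred q
  | imp F G => F.hasPred q ∨ G.hasPred q
  | all f => ∃ d, (f d).hasPred q
  | ex f => ∃ d, (f d).hasPred q

open scoped Classical in
/-- The set `Pos_I(F)` of strictly positive atoms of `F` with respect to `I`. -/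
noncomputable def pos (ints : P → Bool) (I : Interp P D) : Fml P D → Set (GrAtom P D)
  | atom p ds => if ints p = true ∧ I p ds then {(p, ds)} else ∅
  | eq _ _ => ∅
  | bot => ∅
  | and F G =>
      if (Fml.and F G).hasIntens ints ∧ (Fml.and F G).sat I then
        F.pos ints I ∪ G.pos ints I else ∅
  | or F G =>
      if (Fml.or F G).hasIntens ints ∧ (Fml.or F G).sat I then
        F.pos ints I ∪ G.pos ints I else ∅
  | imp F G =>
      if (Fml.imp F G).hasIntens ints ∧ (Fml.imp F G).sat I then G.pos ints I else ∅
  | all f =>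
      if (Fml.all f).hasIntens ints ∧ (Fml.all f).sat I then ⋃ d, (f d).pos ints I else ∅
  | ex f =>
      if (Fml.ex f).hasIntens ints ∧ (Fml.ex f).sat I then ⋃ d, (f d).pos ints I else ∅

/-- `ruleSub S R`: `R` is obtained from a rule subformula of `S` (an occurrence of an
implication not in the antecedent of any implication) by substituting domain elements
for the free variables. -/
inductive ruleSub : Fml P D → Fml P D → Prop
  | self (F G : Fml P D) : ruleSub (Fml.imp F G) (Fml.imp F G)
  | andL {F G R : Fml P D} : ruleSub F R → ruleSub (Fml.and F G) R
  | andR {F G R : Fml P D} : ruleSub G R → ruleSub (Fml.and F G) R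
  | orL {F G R : Fml P D} : ruleSub F R → ruleSub (Fml.or F G) R
  | orR {F G R : Fml P D} : ruleSub G R → ruleSub (Fml.or F G) R
  | impR {F G R : Fml P D} : ruleSub G R → ruleSub (Fml.imp F G) R
  | all {f : D → Fml P D} {R : Fml P D} (d : D) : ruleSub (f d) R → ruleSub (Fml.all f) R
  | ex {f : D → Fml P D} {R : Fml P D} (d : D) : ruleSub (f d) R → ruleSub (Fml.ex f) R

end Fml

variable {P D : Type}

/-- Edge relation of the positive dependency graph `G^sp_I(Γ)`. -/
def depEdge (ints : P → Bool) (I : Interp P D) (Γ : Set (Fml P D))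
    (A B : GrAtom P D) : Prop :=
  ∃ S ∈ Γ, ∃ F G : Fml P D, S.ruleSub (Fml.imp F G) ∧
    A ∈ G.pos ints I ∧ B ∈ F.pos ints I

/-- A graph (given by its edge relation) has no infinite walks. -/
def NoInfWalks {V : Type} (E : V → V → Prop) : Prop :=
  ¬ ∃ w : ℕ → V, ∀ n, E (w n) (w (n + 1))

def SatSet (I : Interp P D) (Γ : Set (Fml P D)) : Prop := ∀ F ∈ Γ, F.sat I

def HtSatSet (ints : P → Bool) (H : Set (GrAtom P D)) (I : Interp P D)
    (Γ : Set (Fml P D)) : Prop := ∀ F ∈ Γ, F.htSat ints H I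

/-- `I` is a stable model of `Γ`. -/
def StableModel (ints : P → Bool) (I : Interp P D) (Γ : Set (Fml P D)) : Prop :=
  SatSet I Γ ∧ ∀ H : Set (GrAtom P D), H ⊂ Fml.idown ints I → ¬ HtSatSet ints H I Γ

/-- `I` is a pointwise stable model of `Γ`. -/
def PointwiseStable (ints : P → Bool) (I : Interp P D) (Γ : Set (Fml P D)) : Prop :=
  SatSet I Γ ∧ ∀ M ∈ Fml.idown ints I,
    ¬ HtSatSet ints (Fml.idown ints I \ {M}) I Γ

/-! ### Completable sets -/

/-- A member of the definition of the intensional symbol `p`: the completable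
sentence `∀̃ (F(U, V) → p(V))` with `m` extra variables `U` and `k` head variables `V`. -/
structure CRule (P D : Type) where
  p : P
  k : ℕ
  m : ℕ
  F : (Fin m → D) → (Fin k → D) → Fml P D

/-- A first-order constraint `∀̃ (F → G)` (with `G` containing no intensional symbols). -/
structure CConstr (P D : Type) where
  n : ℕ
  F : (Fin n → D) → Fml P D
  G : (Fin n → D) → Fml P D

/-- A completable set of sentences: definitions plus constraints. -/
structure CSet (P D : Type) where
  rules : List (CRule P D)
  constrs : List (CConstr P D)

/-- The conditions making a `CSet` a completable set: head symbols are intensional,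
consequents of definitions of the same symbol are identical, and consequents of
constraints contain no intensional symbols. -/
def CSet.Completable (ints : P → Bool) (Γ : CSet P D) : Prop :=
  (∀ r ∈ Γ.rules, ints r.p = true) ∧
  (∀ r ∈ Γ.rules, ∀ r' ∈ Γ.rules, r.p = r'.p → r.k = r'.k) ∧
  (∀ c ∈ Γ.constrs, ∀ a, ¬ (c.G a).hasIntens ints)

/-- `n`-fold universal quantification. -/
def allN : (n : ℕ) → ((Fin n → D) → Fml P D) → Fml P D
  | 0, F => F (fun i => i.elim0)
  | n + 1, F => Fml.all fun d => allN n fun a => F (Fin.cons d a)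

def CRule.sent (r : CRule P D) : Fml P D :=
  allN r.m fun u => allN r.k fun v =>
    Fml.imp (r.F u v) (Fml.atom r.p (List.ofFn v))

def CConstr.sent (c : CConstr P D) : Fml P D :=
  allN c.n fun a => Fml.imp (c.F a) (c.G a)

/-- The set of sentences of a completable set. -/
def CSet.sents (Γ : CSet P D) : Set (Fml P D) :=
  {S | ∃ r ∈ Γ.rules, S = r.sent} ∪ {S | ∃ c ∈ Γ.constrs, S = c.sent}

/-- `I` is a supported model of `Γ`: every true intensional ground atom `p(d)` is the
consequent of an instance `F → p(d)` of a member of `Γ` whose antecedent is satisfied. -/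
def CSet.Supported (ints : P → Bool) (I : Interp P D) (Γ : CSet P D) : Prop :=
  SatSet I Γ.sents ∧
  ∀ p (ds : List D), ints p = true → I p ds →
    ∃ r ∈ Γ.rules, r.p = p ∧
      ∃ (v : Fin r.k → D) (u : Fin r.m → D), List.ofFn v = ds ∧ (r.F u v).sat I

/-- `I` satisfies the completion `COMP[Γ]` of the completable set `Γ`:
the completed definitions of all intensional symbols plus the constraints. -/
def CSet.SatComp (ints : P → Bool) (I : Interp P D) (Γ : CSet P D) : Prop :=
  (∀ p, ints p = true → ∀ ds : List D,
    (I p ds ↔ ∃ r ∈ Γ.rules, r.p = p ∧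
      ∃ (v : Fin r.k → D) (u : Fin r.m → D), List.ofFn v = ds ∧ (r.F u v).sat I)) ∧
  (∀ c ∈ Γ.constrs, ∀ a, (c.F a).sat I → (c.G a).sat I)

/-- Edge relation of `G^sp_I(Γ)` for a completable set `Γ`, via instances `F → G`
of its members. -/
def CSet.edge (ints : P → Bool) (I : Interp P D) (Γ : CSet P D)
    (A B : GrAtom P D) : Prop :=
  ∃ F G : Fml P D,
    ((∃ r ∈ Γ.rules, ∃ (u : Fin r.m → D) (v : Fin r.k → D),
        F = r.F u v ∧ G = Fml.atom r.p (List.ofFn v)) ∨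
     (∃ c ∈ Γ.constrs, ∃ a : Fin c.n → D, F = c.F a ∧ G = c.G a)) ∧
    A ∈ G.pos ints I ∧ B ∈ F.pos ints I

/-- `I` is a stable model of the completable set `Γ`. -/
def CSet.Stable (ints : P → Bool) (I : Interp P D) (Γ : CSet P D) : Prop :=
  StableModel ints I Γ.sents

/-- `I` is a pointwise stable model of the completable set `Γ`. -/
def CSet.PointwiseStable (ints : P → Bool) (I : Interp P D) (Γ : CSet P D) : Prop :=
  _root_.PointwiseStable ints I Γ.sents

section Aux

variable {ints : P → Bool} {I : Interp P D}

/-- Persistence: HT-satisfaction with `H ⊆ I↓` implies classical satisfaction. -/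
theorem sat_of_htSat {H : Set (GrAtom P D)} (hH : H ⊆ Fml.idown ints I) :
    ∀ F : Fml P D, F.htSat ints H I → F.sat I := by
  intro F
  induction F with
  | atom p ds =>
      intro h
      simp only [Fml.htSat] at h
      simp only [Fml.sat]
      split at h
      · exact (hH h).2
      · exact h
  | eq a b => exact fun h => h
  | bot => exact fun h => h
  | and F G ihF ihG => exact fun h => ⟨ihF h.1, ihG h.2⟩
  | or F G ihF ihG => exact fun h => h.elim (fun h => Or.inl (ihF h)) (fun h => Or.inr (ihG h))
  | imp F G ihF ihG => exact fun h => h.2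
  | all f ih => exact fun h d => ih d (h d)
  | ex f ih => exact fun h => h.elim fun d hd => ⟨d, ih d hd⟩

/-- If `F` has no intensional symbols, HT-satisfaction coincides with classical. -/
theorem htSat_iff_sat_of_not_hasIntens {H : Set (GrAtom P D)} :
    ∀ F : Fml P D, ¬ F.hasIntens ints → (F.htSat ints H I ↔ F.sat I) := by
  intro F
  induction F with
  | atom p ds =>
      intro h
      simp only [Fml.hasIntens] at h
      simp only [Fml.htSat, Fml.sat, if_neg h]
  | eq a b => exact fun _ => Iff.rfl
  | bot => exact fun _ => Iff.rfl
  | and F G ihF ihG =>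
      intro h
      simp only [Fml.hasIntens] at h
      push_neg at h
      simp only [Fml.htSat, Fml.sat, ihF h.1, ihG h.2]
  | or F G ihF ihG =>
      intro h
      simp only [Fml.hasIntens] at h
      push_neg at h
      simp only [Fml.htSat, Fml.sat, ihF h.1, ihG h.2]
  | imp F G ihF ihG =>
      intro h
      simp only [Fml.hasIntens] at h
      push_neg at h
      simp only [Fml.htSat, Fml.sat, ihF h.1, ihG h.2, and_self]
  | all f ih =>
      intro h
      simp only [Fml.hasIntens] at h
      push_neg at h
      simp only [Fml.htSat, Fml.sat]
      exact forall_congr' fun d => ih d (h d)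
  | ex f ih =>
      intro h
      simp only [Fml.hasIntens] at h
      push_neg at h
      simp only [Fml.htSat, Fml.sat]
      exact exists_congr fun d => ih d (h d)

/-- `Pos_I(F) ⊆ I↓`. -/
theorem pos_subset_idown : ∀ F : Fml P D, F.pos ints I ⊆ Fml.idown ints I := by
  intro F
  induction F with
  | atom p ds =>
      intro A hA
      simp only [Fml.pos] at hA
      split at hA
      · rename_i hc
        rw [Set.mem_singleton_iff] at hA
        subst hA
        exact ⟨hc.1, hc.2⟩
      · exact absurd hA (Set.notMem_empty A)
  | eq a b => exact fun A hA => absurd hA (Set.notMem_empty A)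
  | bot => exact fun A hA => absurd hA (Set.notMem_empty A)
  | and F G ihF ihG =>
      intro A hA
      simp only [Fml.pos] at hA
      split at hA
      · exact hA.elim (fun h => ihF h) (fun h => ihG h)
      · exact absurd hA (Set.notMem_empty A)
  | or F G ihF ihG =>
      intro A hA
      simp only [Fml.pos] at hA
      split at hA
      · exact hA.elim (fun h => ihF h) (fun h => ihG h)
      · exact absurd hA (Set.notMem_empty A)
  | imp F G ihF ihG =>
      intro A hA
      simp only [Fml.pos] at hA
      split at hA
      · exact ihG hA
      · exact absurd hA (Set.notMem_empty A)
  | all f ih =>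
      intro A hA
      simp only [Fml.pos] at hA
      split at hA
      · obtain ⟨s, ⟨d, rfl⟩, hd⟩ := hA
        exact ih d hd
      · exact absurd hA (Set.notMem_empty A)
  | ex f ih =>
      intro A hA
      simp only [Fml.pos] at hA
      split at hA
      · obtain ⟨s, ⟨d, rfl⟩, hd⟩ := hA
        exact ih d hd
      · exact absurd hA (Set.notMem_empty A)

/-- Key lemma: if `I ⊨ F` and `Pos_I(F) ⊆ H'` for some `H' ⊆ I↓`, then `⟨H', I⟩ ⊨ F`. -/
theorem htSat_of_sat_of_pos_subset {H' : Set (GrAtom P D)} (hH' : H' ⊆ Fml.idown ints I) :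
    ∀ F : Fml P D, F.sat I → F.pos ints I ⊆ H' → F.htSat ints H' I := by
  intro F
  induction F with
  | atom p ds =>
      intro hs hp
      simp only [Fml.sat] at hs
      simp only [Fml.htSat]
      split
      · rename_i hi
        have : (p, ds) ∈ Fml.pos ints I (Fml.atom p ds) := by
          simp only [Fml.pos, if_pos (⟨hi, hs⟩ : ints p = true ∧ I p ds)]
          rfl
        exact hp this
      · exact hs
  | eq a b => exact fun hs _ => hs
  | bot => exact fun hs _ => hs
  | and F G ihF ihG =>
      intro hs hp
      by_cases hi : (Fml.and F G).hasIntens ints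
      · rw [Fml.pos, if_pos ⟨hi, hs⟩] at hp
        exact ⟨ihF hs.1 (fun A hA => hp (Or.inl hA)), ihG hs.2 (fun A hA => hp (Or.inr hA))⟩
      · exact (htSat_iff_sat_of_not_hasIntens _ hi).2 hs
  | or F G ihF ihG =>
      intro hs hp
      by_cases hi : (Fml.or F G).hasIntens ints
      · rw [Fml.pos, if_pos ⟨hi, hs⟩] at hp
        exact hs.elim (fun h => Or.inl (ihF h (fun A hA => hp (Or.inl hA))))
          (fun h => Or.inr (ihG h (fun A hA => hp (Or.inr hA))))
      · exact (htSat_iff_sat_of_not_hasIntens _ hi).2 hs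
  | imp F G ihF ihG =>
      intro hs hp
      by_cases hi : (Fml.imp F G).hasIntens ints
      · rw [Fml.pos, if_pos ⟨hi, hs⟩] at hp
        refine ⟨fun hF => ?_, hs⟩
        exact ihG (hs (sat_of_htSat hH' F hF)) hp
      · exact (htSat_iff_sat_of_not_hasIntens _ hi).2 hs
  | all f ih =>
      intro hs hp
      by_cases hi : (Fml.all f).hasIntens ints
      · rw [Fml.pos, if_pos ⟨hi, hs⟩] at hp
        exact fun d => ih d (hs d) (fun A hA => hp (Set.mem_iUnion.2 ⟨d, hA⟩))
      · exact (htSat_iff_sat_of_not_hasIntens _ hi).2 hs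
  | ex f ih =>
      intro hs hp
      by_cases hi : (Fml.ex f).hasIntens ints
      · rw [Fml.pos, if_pos ⟨hi, hs⟩] at hp
        obtain ⟨d, hd⟩ := hs
        exact ⟨d, ih d hd (fun A hA => hp (Set.mem_iUnion.2 ⟨d, hA⟩))⟩
      · exact (htSat_iff_sat_of_not_hasIntens _ hi).2 hs

theorem depEdge_mono {F F' : Fml P D} (A B : GrAtom P D)
    (hc : ∀ R : Fml P D, F'.ruleSub R → F.ruleSub R)
    (h : depEdge ints I {F'} A B) : depEdge ints I {F} A B := by
  obtain ⟨S, hS, F₁, G₁, hrs, hA, hB⟩ := h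
  rw [Set.mem_singleton_iff] at hS
  subst hS
  exact ⟨F, rfl, F₁, G₁, hc _ hrs, hA, hB⟩

end Aux

/-- Lemma 2: if (i) every edge `(M, B)` of `G^sp_I(F)` has `B ∈ H`, (ii) `M ∈ Pos_I(F)`,
and (iii) `⟨H, I⟩ ⊨_ht F`, then `⟨I↓ ∖ {M}, I⟩ ⊨_ht F`. -/
theorem htSat_remove_of_edges {P D : Type} (ints : P → Bool) (I : Interp P D)
    (H : Set (GrAtom P D)) (hH : H ⊆ Fml.idown ints I)
    (M : GrAtom P D) (hM : M ∈ Fml.idown ints I \ H) (F : Fml P D)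
    (h1 : ∀ B, depEdge ints I {F} M B → B ∈ H)
    (h2 : M ∈ F.pos ints I)
    (h3 : F.htSat ints H I) :
    F.htSat ints (Fml.idown ints I \ {M}) I := by
  clear h2
  have hJsub : Fml.idown ints I \ {M} ⊆ Fml.idown ints I := Set.diff_subset
  have hHJ : H ⊆ Fml.idown ints I \ {M} := fun a ha =>
    ⟨hH ha, fun hm => hM.2 ((Set.mem_singleton_iff.1 hm) ▸ ha)⟩
  induction F with
  | atom p ds =>
      simp only [Fml.htSat] at h3 ⊢
      split at h3
      · rename_i hi
        rw [if_pos hi]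
        exact hHJ h3
      · rename_i hi
        rw [if_neg hi]
        exact h3
  | eq a b => exact h3
  | bot => exact h3
  | and F G ihF ihG =>
      exact ⟨ihF (fun B hB => h1 B (depEdge_mono M B (fun R h => Fml.ruleSub.andL h) hB)) h3.1,
        ihG (fun B hB => h1 B (depEdge_mono M B (fun R h => Fml.ruleSub.andR h) hB)) h3.2⟩
  | or F G ihF ihG =>
      exact h3.elim
        (fun h => Or.inl (ihF (fun B hB => h1 B
          (depEdge_mono M B (fun R h => Fml.ruleSub.orL h) hB)) h))
        (fun h => Or.inr (ihG (fun B hB => h1 B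
          (depEdge_mono M B (fun R h => Fml.ruleSub.orR h) hB)) h))
  | imp F G ihF ihG =>
      refine ⟨fun hJF => ?_, h3.2⟩
      have hsF : F.sat I := sat_of_htSat hJsub F hJF
      have hsG : G.sat I := h3.2 hsF
      by_cases hMp : M ∈ G.pos ints I
      · -- edges from M via this rule land in H, so `Pos_I(F) ⊆ H`
        have hFpos : F.pos ints I ⊆ H := fun B hB =>
          h1 B ⟨Fml.imp F G, rfl, F, G, Fml.ruleSub.self F G, hMp, hB⟩
        have hHF : F.htSat ints H I := htSat_of_sat_of_pos_subset hH F hsF hFpos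
        exact ihG (fun B hB => h1 B
          (depEdge_mono M B (fun R h => Fml.ruleSub.impR h) hB)) (h3.1 hHF)
      · have hGpos : G.pos ints I ⊆ Fml.idown ints I \ {M} := fun B hB =>
          ⟨pos_subset_idown G hB, fun hm => hMp ((Set.mem_singleton_iff.1 hm) ▸ hB)⟩
        exact htSat_of_sat_of_pos_subset hJsub G hsG hGpos
  | all f ih =>
      exact fun d => ih d (fun B hB => h1 B
        (depEdge_mono M B (fun R h => Fml.ruleSub.all d h) hB)) (h3 d)
  | ex f ih =>
      obtain ⟨d, hd⟩ := h3
      exact ⟨d, ih d (fun B hB => h1 B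
        (depEdge_mono M B (fun R h => Fml.ruleSub.ex d h) hB)) hd⟩
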